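/- arXiv:2603.14009 — 4 statements merged into one kernel-verified Lean document; each statement's English description precedes it below -/
import Mathlib

section
/- Let q be a prime power, s ≥ 2, and u | (q^s−1)/(q−1), with u, q^{s-1} coprime. Define ι : ℕ → ℕ × ℕ as the partial inverse of (i,j) ↦ i·q^{s-1}+j·u on {(i,j) : 0 ≤ j < q^{s-1}}. Suppose γ₁ < γ₂ < ⋯ < γ_w are elements of {i·q^{s-1}+j·u : 0 ≤ i, 0 ≤ j < q^{s-1}} with γ_w − γ₁ < min{u, q^{s-1}}. Writing ι(γ_k) = (a'_k, b'_k), the multiset {(a'_1,b'_1),…,(a'_w,b'_w)} can be enumerated as (a₁,b₁),…,(a_w,b_w) with a₁ < a₂ < ⋯ < a_w and b_w < b_{w-1} < ⋯ < b₁. -/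
/-!
Two window elements `γ k < γ l` whose coordinates satisfy `a' k ≤ a' l` and `b' k ≤ b' l`
would differ by at least `q ^ (s - 1)` (if the `a'` differ) or by at least `u` (if the `b'` differ),
which the window forbids. So the coordinate pairs form an antichain in the product order, and sorting
by the first coordinate makes the second one strictly decreasing.
-/

lemma Nat.mul_add_mul_add_min_le {a₁ a₂ b₁ b₂ Q u : ℕ} (ha : a₁ ≤ a₂) (hb : b₁ ≤ b₂)
    (hlt : a₁ * Q + b₁ * u < a₂ * Q + b₂ * u) :
    a₁ * Q + b₁ * u + min u Q ≤ a₂ * Q + b₂ * u := by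
  rcases ha.lt_or_eq with ha | rfl
  · have hQ : a₁ * Q + Q ≤ a₂ * Q := by simpa [Nat.succ_mul] using Nat.mul_le_mul_right Q ha
    have hu : b₁ * u ≤ b₂ * u := Nat.mul_le_mul_right u hb
    have := min_le_right u Q
    omega
  · have hb : b₁ < b₂ := by
      by_contra! h
      have := Nat.mul_le_mul_right u h
      omega
    have hu : b₁ * u + u ≤ b₂ * u := by simpa [Nat.succ_mul] using Nat.mul_le_mul_right u hb
    have := min_le_left u Q
    omega

section Antichain

variable {α β : Type*} [LinearOrder α] [LinearOrder β] {w : ℕ} {a : Fin w → α} {b : Fin w → β}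

lemma injective_of_le_of_le_imp_eq (h : ∀ k l, a k ≤ a l → b k ≤ b l → k = l) :
    Function.Injective a := by
  intro k l hkl
  rcases le_total (b k) (b l) with hb | hb
  · exact h k l hkl.le hb
  · exact (h l k hkl.ge hb).symm

lemma lt_of_lt_of_le_of_le_imp_eq (h : ∀ k l, a k ≤ a l → b k ≤ b l → k = l) {k l : Fin w}
    (hlt : a k < a l) : b l < b k := by
  by_contra! hb
  exact hlt.ne (congrArg a (h k l hlt.le hb))

lemma exists_perm_strictMono_strictAnti (h : ∀ k l, a k ≤ a l → b k ≤ b l → k = l) :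
    ∃ σ : Equiv.Perm (Fin w), StrictMono (a ∘ σ) ∧ StrictAnti (b ∘ σ) := by
  have hmono : StrictMono (a ∘ Tuple.sort a) :=
    (Tuple.monotone_sort a).strictMono_of_injective
      ((injective_of_le_of_le_imp_eq h).comp (Tuple.sort a).injective)
  exact ⟨Tuple.sort a, hmono, fun _ _ hij => lt_of_lt_of_le_of_le_imp_eq h (hmono hij)⟩

end Antichain

theorem norm_trace_window_enumeration_general
    (q s u w : ℕ)
    (γ : Fin w → ℕ) (hmono : StrictMono γ)
    (a' b' : Fin w → ℕ)
    (hrep : ∀ k, γ k = a' k * q ^ (s - 1) + b' k * u)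
    (hwindow : ∀ i j : Fin w, γ i < γ j + min u (q ^ (s - 1))) :
    ∃ σ : Equiv.Perm (Fin w),
      StrictMono (a' ∘ σ) ∧ StrictAnti (b' ∘ σ) := by
  refine exists_perm_strictMono_strictAnti fun k l ha hb => ?_
  have hle : γ k ≤ γ l := by
    rw [hrep k, hrep l]
    exact add_le_add (Nat.mul_le_mul_right _ ha) (Nat.mul_le_mul_right _ hb)
  by_contra hne
  have hlt : γ k < γ l := hle.lt_of_ne (hmono.injective.ne hne)
  have hgap := Nat.mul_add_mul_add_min_le ha hb (by rwa [← hrep, ← hrep])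
  rw [← hrep, ← hrep] at hgap
  exact (hwindow l k).not_ge hgap

theorem norm_trace_window_enumeration
    (q s u w : ℕ) (hq : IsPrimePow q) (hs : 2 ≤ s)
    (hu : 0 < u) (hdiv : u ∣ (q ^ s - 1) / (q - 1))
    (hcop : Nat.Coprime u (q ^ (s - 1)))
    (γ : Fin w → ℕ) (hmono : StrictMono γ)
    (a' b' : Fin w → ℕ)
    (hrep : ∀ k, γ k = a' k * q ^ (s - 1) + b' k * u)
    (hb : ∀ k, b' k < q ^ (s - 1))
    (hwindow : ∀ i j : Fin w, γ i < γ j + min u (q ^ (s - 1))) :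
    ∃ σ : Equiv.Perm (Fin w),
      StrictMono (a' ∘ σ) ∧ StrictAnti (b' ∘ σ) :=
  norm_trace_window_enumeration_general q s u w γ hmono a' b' hrep hwindow
end

section
/- Let q be a prime power, s ≥ 2, u a positive divisor of (q^s−1)/(q−1), and set m = q^{s-1}. Suppose γ₁ < ⋯ < γ_w ∈ {i·m + j·u : 0 ≤ i ≤ u(q−1), 0 ≤ j < m} have ι(γ_k) = (a_k, b_k) with a₁ < ⋯ < a_w and b_w < ⋯ < b₁ and a_w − a₁ < u. Then the cardinality of the set B = {(i,j) : 0 ≤ i ≤ u(q−1), 0 ≤ j < m, and ((a_k,b_k) ≤_p (i,j) for some k) or (a₁+u, 0) ≤_p (i,j)} equals (u(q−1)+1)·m − (a₁·m + b_w·u + Σ_{k=1}^{w−1} (a_{k+1} − a_k)·(b_k − b_w)). -/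
theorem norm_trace_staircase_count
    (q s u w : ℕ) (hq : IsPrimePow q) (hs : 2 ≤ s)
    (hu : 0 < u) (hdiv : u ∣ (q ^ s - 1) / (q - 1)) (hw : 1 ≤ w)
    (γ a b : ℕ → ℕ)
    (hγmono : ∀ k, k + 1 < w → γ k < γ (k + 1))
    (hrep : ∀ k < w, γ k = a k * q ^ (s - 1) + b k * u)
    (hai : ∀ k < w, a k ≤ u * (q - 1))
    (hbj : ∀ k < w, b k < q ^ (s - 1))
    (hamono : ∀ k, k + 1 < w → a k < a (k + 1))
    (hbanti : ∀ k, k + 1 < w → b (k + 1) < b k)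
    (hspread : a (w - 1) - a 0 < u)
    (hfit : a 0 + u ≤ u * (q - 1) + 1) :
    (((Finset.range (u * (q - 1) + 1)) ×ˢ (Finset.range (q ^ (s - 1)))).filter
        (fun p : ℕ × ℕ =>
          (∃ k < w, a k ≤ p.1 ∧ b k ≤ p.2) ∨ (a 0 + u ≤ p.1 ∧ 0 ≤ p.2))).card
      = (u * (q - 1) + 1) * q ^ (s - 1)
        - (a 0 * q ^ (s - 1) + b (w - 1) * u
            + ∑ k ∈ Finset.range (w - 1), (a (k + 1) - a k) * (b k - b (w - 1))) := by
  classical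
  set m := q ^ (s - 1) with hm
  set U := u * (q - 1) + 1 with hU
  have hw1 : w - 1 < w := by omega
  -- monotonicity facts
  have hA : ∀ l, l < w → ∀ k, k ≤ l → a k ≤ a l := by
    intro l
    induction l with
    | zero => intro _ k hk; rw [Nat.le_zero.mp hk]
    | succ n ih =>
      intro hl k hk
      rcases Nat.lt_or_ge k (n + 1) with h | h
      · exact le_trans (ih (by omega) k (by omega)) (le_of_lt (hamono n hl))
      · have hk1 : k = n + 1 := by omega
        rw [hk1]
  have hB : ∀ l, l < w → ∀ k, k ≤ l → b l ≤ b k := by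
    intro l
    induction l with
    | zero => intro _ k hk; rw [Nat.le_zero.mp hk]
    | succ n ih =>
      intro hl k hk
      rcases Nat.lt_or_ge k (n + 1) with h | h
      · exact le_trans (le_of_lt (hbanti n hl)) (ih (by omega) k (by omega))
      · have hk1 : k = n + 1 := by omega
        rw [hk1]
  have haw : a (w - 1) < a 0 + u := by
    have h1 := hA (w - 1) hw1 0 (Nat.zero_le _)
    omega
  have ha0w : a 0 ≤ a (w - 1) := hA (w - 1) hw1 0 (Nat.zero_le _)
  have hbwm : b (w - 1) < m := hbj (w - 1) hw1
  -- the three pieces of the complement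
  set D1 : Finset (ℕ × ℕ) := Finset.range (a 0) ×ˢ Finset.range m with hD1def
  set D2 : Finset (ℕ × ℕ) :=
    (Finset.range (w - 1)).biUnion
      (fun k => Finset.Ico (a k) (a (k + 1)) ×ˢ Finset.range (b k)) with hD2def
  set D3 : Finset (ℕ × ℕ) :=
    Finset.Ico (a (w - 1)) (a 0 + u) ×ˢ Finset.range (b (w - 1)) with hD3def
  -- the complement equals D1 ∪ D2 ∪ D3
  have hcompl :
      (Finset.range U ×ˢ Finset.range m).filter
        (fun p : ℕ × ℕ =>
          ¬ ((∃ k < w, a k ≤ p.1 ∧ b k ≤ p.2) ∨ (a 0 + u ≤ p.1 ∧ 0 ≤ p.2)))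
      = D1 ∪ D2 ∪ D3 := by
    ext ⟨i, j⟩
    simp only [hD1def, hD2def, hD3def, Finset.mem_filter, Finset.mem_product,
      Finset.mem_range, Finset.mem_union, Finset.mem_biUnion, Finset.mem_Ico]
    constructor
    · rintro ⟨⟨hi, hj⟩, hnp⟩
      push_neg at hnp
      obtain ⟨h1, h2⟩ := hnp
      have hiu : i < a 0 + u := by
        by_contra hcon
        have := h2 (by omega)
        omega
      rcases Nat.lt_or_ge i (a 0) with hia | hia
      · exact Or.inl (Or.inl ⟨hia, hj⟩)
      · have hfind : ∃ K, K ≤ w - 1 ∧ a K ≤ i ∧ (K < w - 1 → i < a (K + 1)) := by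
          refine ⟨Nat.findGreatest (fun k => a k ≤ i) (w - 1),
            Nat.findGreatest_le _, Nat.findGreatest_spec (P := fun k => a k ≤ i) (m := 0) (Nat.zero_le _) hia, ?_⟩
          intro hlt
          have hng := Nat.findGreatest_is_greatest (P := fun k => a k ≤ i)
            (n := w - 1) (Nat.lt_succ_self _) (by omega)
          simp only [not_le] at hng
          exact hng
        obtain ⟨K, hK2, hK1, hKnext⟩ := hfind
        have hjb : j < b K := h1 K (by omega) hK1
        rcases Nat.eq_or_lt_of_le hK2 with hKeq | hKlt
        · refine Or.inr ⟨⟨?_, ?_⟩, ?_⟩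
          · rw [← hKeq]; exact hK1
          · omega
          · rw [← hKeq]; exact hjb
        · exact Or.inl (Or.inr ⟨K, by omega, ⟨hK1, hKnext hKlt⟩, hjb⟩)
    · rintro ((⟨hia, hjm⟩ | ⟨k, hk, ⟨hki, hik⟩, hjb⟩) | ⟨⟨hwi, hiu⟩, hjb⟩)
      · have ha0 := hai 0 (by omega)
        refine ⟨⟨by omega, hjm⟩, ?_⟩
        rintro (⟨l, hl, hal, _⟩ | ⟨hl, _⟩)
        · have := hA l hl 0 (Nat.zero_le _); omega
        · omega
      · have hkw : k + 1 ≤ w - 1 := by omega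
        have h1 : a (k + 1) ≤ a (w - 1) := hA (w - 1) hw1 (k + 1) hkw
        have hbm : b k < m := hbj k (by omega)
        refine ⟨⟨by omega, by omega⟩, ?_⟩
        rintro (⟨l, hl, hal, hbl⟩ | ⟨hl, _⟩)
        · rcases Nat.lt_or_ge k l with h | h
          · have := hA l hl (k + 1) (by omega); omega
          · have := hB k (by omega) l h; omega
        · omega
      · refine ⟨⟨by omega, by omega⟩, ?_⟩
        rintro (⟨l, hl, hal, hbl⟩ | ⟨hl, _⟩)
        · have := hB (w - 1) hw1 l (by omega); omega
        · omega
  -- disjointness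
  have hd23 : Disjoint D2 D3 := by
    rw [Finset.disjoint_left]
    rintro ⟨i, j⟩ hp hq
    simp only [hD2def, hD3def, Finset.mem_biUnion, Finset.mem_product, Finset.mem_Ico,
      Finset.mem_range] at hp hq
    obtain ⟨k, hk, ⟨_, hik⟩, _⟩ := hp
    have := hA (w - 1) hw1 (k + 1) (by omega)
    omega
  have hd123 : Disjoint D1 (D2 ∪ D3) := by
    rw [Finset.disjoint_left]
    rintro ⟨i, j⟩ hp hq
    simp only [hD1def, hD2def, hD3def, Finset.mem_union, Finset.mem_biUnion,
      Finset.mem_product, Finset.mem_Ico, Finset.mem_range] at hp hq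
    rcases hq with ⟨k, hk, ⟨hki, _⟩, _⟩ | ⟨hki, _⟩
    · have := hA k (by omega) 0 (Nat.zero_le _); omega
    · omega
  -- card of D2
  have hcard2 : D2.card = ∑ k ∈ Finset.range (w - 1), (a (k + 1) - a k) * b k := by
    rw [hD2def, Finset.card_biUnion]
    · apply Finset.sum_congr rfl
      intro k hk
      rw [Finset.card_product, Nat.card_Ico, Finset.card_range]
    · intro k hk l hl hkl
      rw [Function.onFun, Finset.disjoint_left]
      rintro ⟨i, j⟩ hp hq
      simp only [Finset.mem_product, Finset.mem_Ico, Finset.mem_range] at hp hq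
      simp only [Finset.coe_range, Set.mem_Iio] at hk hl
      rcases Nat.lt_or_ge k l with h | h
      · have := hA l (by omega) (k + 1) (by omega); omega
      · have hlk : l < k := by omega
        have := hA k (by omega) (l + 1) (by omega); omega
  -- telescoping sum
  have htel : ∀ n, n ≤ w - 1 →
      ∑ k ∈ Finset.range n, (a (k + 1) - a k) = a n - a 0 := by
    intro n hn
    induction n with
    | zero => simp
    | succ n ih =>
      rw [Finset.sum_range_succ, ih (by omega)]
      have h1 := hA n (by omega) 0 (Nat.zero_le _)
      have h2 := hamono n (by omega)
      omega
  -- total card of the complement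
  have hcardD : (D1 ∪ D2 ∪ D3).card
      = a 0 * m + b (w - 1) * u
        + ∑ k ∈ Finset.range (w - 1), (a (k + 1) - a k) * (b k - b (w - 1)) := by
    rw [Finset.union_assoc, Finset.card_union_of_disjoint hd123,
      Finset.card_union_of_disjoint hd23, hcard2]
    have hc1 : D1.card = a 0 * m := by
      rw [hD1def, Finset.card_product, Finset.card_range, Finset.card_range]
    have hc3 : D3.card = (a 0 + u - a (w - 1)) * b (w - 1) := by
      rw [hD3def, Finset.card_product, Nat.card_Ico, Finset.card_range]
    rw [hc1, hc3]
    have hsum : ∑ k ∈ Finset.range (w - 1), (a (k + 1) - a k) * b k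
        = (∑ k ∈ Finset.range (w - 1), (a (k + 1) - a k) * (b k - b (w - 1)))
          + (a (w - 1) - a 0) * b (w - 1) := by
      rw [← htel (w - 1) le_rfl, Finset.sum_mul, ← Finset.sum_add_distrib]
      apply Finset.sum_congr rfl
      intro k hk
      simp only [Finset.mem_range] at hk
      have hbk := hB (w - 1) hw1 k (by omega)
      rw [← Nat.mul_add, Nat.sub_add_cancel hbk]
    rw [hsum]
    have key : (a (w - 1) - a 0) * b (w - 1) + (a 0 + u - a (w - 1)) * b (w - 1)
        = b (w - 1) * u := by
      rw [← Nat.add_mul]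
      have : a (w - 1) - a 0 + (a 0 + u - a (w - 1)) = u := by omega
      rw [this, Nat.mul_comm]
    omega
  -- put things together
  have hsplit := Finset.card_filter_add_card_filter_not
    (s := Finset.range U ×ˢ Finset.range m)
    (p := fun p : ℕ × ℕ =>
      (∃ k < w, a k ≤ p.1 ∧ b k ≤ p.2) ∨ (a 0 + u ≤ p.1 ∧ 0 ≤ p.2))
  rw [hcompl, hcardD] at hsplit
  have hgrid : (Finset.range U ×ˢ Finset.range m).card = U * m := by
    rw [Finset.card_product, Finset.card_range, Finset.card_range]
  rw [hgrid] at hsplit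
  omega
end

section
/- Let C₂ ⊊ C₁ ⊆ F^n be linear codes over a finite field F with dim C₁ − dim C₂ = ℓ ≥ 1. For 1 ≤ t ≤ ℓ define the t-th relative generalized Hamming weight M_t(C₁, C₂) = min{#Supp(D) : D a subspace of C₁, D ∩ C₂ = {0}, dim D = t}, where Supp(D) = {i : ∃ v ∈ D, v_i ≠ 0}. Then M_t(C₁, C₂) is well-defined (the minimizing set is nonempty) and the sequence is strictly increasing: M_1(C₁,C₂) < M_2(C₁,C₂) < ⋯ < M_ℓ(C₁,C₂). -/
def codeSupp {n : ℕ} {F : Type} [Field F] (D : Submodule F (Fin n → F)) :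
    Set (Fin n) := {i | ∃ v ∈ D, v i ≠ 0}

def rghwSet {n : ℕ} {F : Type} [Field F]
    (C₁ C₂ : Submodule F (Fin n → F)) (t : ℕ) : Set ℕ :=
  {m | ∃ D : Submodule F (Fin n → F),
    D ≤ C₁ ∧ D ⊓ C₂ = ⊥ ∧ Module.finrank F D = t ∧ (codeSupp D).ncard = m}

/-!
A complement of `C₂` inside `C₁` has dimension `ℓ` and meets `C₂` trivially, so it contains
witnesses of every dimension `t ≤ ℓ`. For strict monotonicity, take a `(t+1)`-dimensional witness
of minimal support and some `i` in its support: its intersection with the coordinate hyperplane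
`x i = 0` is a `t`-dimensional witness whose support misses `i`.
-/

open Module

namespace Submodule

variable {K V : Type*} [DivisionRing K] [AddCommGroup V] [Module K V]

theorem exists_le_finrank_eq (p : Submodule K V) {t : ℕ} (ht : t ≤ finrank K p) :
    ∃ q ≤ p, finrank K q = t := by
  obtain ⟨f, hf⟩ := exists_linearIndependent_of_le_finrank ht
  refine ⟨(span K (Set.range f)).map p.subtype, map_subtype_le _ _, ?_⟩
  rw [finrank_map_subtype_eq, finrank_span_eq_card hf, Fintype.card_fin]

theorem exists_le_disjoint_finrank_eq [FiniteDimensional K V] {p q : Submodule K V} (hpq : p ≤ q)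
    {t : ℕ} (ht : t + finrank K p ≤ finrank K q) :
    ∃ r ≤ q, Disjoint r p ∧ finrank K r = t := by
  obtain ⟨E, hpE, rfl⟩ := IsModularLattice.exists_disjoint_and_sup_eq hpq
  have hE : finrank K ↥(p ⊔ E) = finrank K p + finrank K E := by
    rw [← finrank_sup_add_finrank_inf_eq, hpE.eq_bot, finrank_bot, add_zero]
  obtain ⟨r, hrE, hr⟩ := E.exists_le_finrank_eq (t := t) (by omega)
  exact ⟨r, hrE.trans le_sup_right, (hpE.mono_right hrE).symm, hr⟩

end Submodule

section codeSupp

variable {n : ℕ} {F : Type} [Field F]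

theorem codeSupp_mono {D D' : Submodule F (Fin n → F)} (h : D ≤ D') : codeSupp D ⊆ codeSupp D' :=
  fun _ ⟨v, hv, hvi⟩ ↦ ⟨v, h hv, hvi⟩

theorem codeSupp_nonempty {D : Submodule F (Fin n → F)} (hD : D ≠ ⊥) : (codeSupp D).Nonempty := by
  obtain ⟨v, hv, hv0⟩ := D.exists_mem_ne_zero_of_ne_bot hD
  obtain ⟨i, hvi⟩ := Function.ne_iff.mp hv0
  exact ⟨i, v, hv, hvi⟩

theorem exists_finrank_eq_codeSupp_ssubset (D : Submodule F (Fin n → F)) {t : ℕ}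
    (hD : finrank F D = t + 1) :
    ∃ D' ≤ D, finrank F D' = t ∧ codeSupp D' ⊂ codeSupp D := by
  obtain ⟨i, v, hv, hvi⟩ := codeSupp_nonempty (D := D) (by rintro rfl; simp at hD)
  set φ : Dual F D := (LinearMap.proj i).domRestrict D
  have hφ : φ ≠ 0 := fun h ↦ hvi (LinearMap.congr_fun h ⟨v, hv⟩)
  have hker : finrank F (LinearMap.ker φ) = t := by
    have := Dual.finrank_ker_add_one_of_ne_zero hφ
    omega
  refine ⟨(LinearMap.ker φ).map D.subtype, Submodule.map_subtype_le _ _, ?_,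
    Set.ssubset_iff_exists.mpr ⟨codeSupp_mono (Submodule.map_subtype_le _ _), i, ⟨v, hv, hvi⟩, ?_⟩⟩
  · rwa [Submodule.finrank_map_subtype_eq]
  · rintro ⟨_, ⟨u, hu, rfl⟩, hui⟩
    exact hui hu

end codeSupp

section rghw

variable {n : ℕ} {F : Type} [Field F] {C₁ C₂ : Submodule F (Fin n → F)} {t : ℕ}

theorem rghwSet_nonempty (hsub : C₂ ≤ C₁) (ht : t + finrank F C₂ ≤ finrank F C₁) :
    (rghwSet C₁ C₂ t).Nonempty := by
  obtain ⟨D, hD₁, hD₂, hD⟩ := Submodule.exists_le_disjoint_finrank_eq hsub ht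
  exact ⟨_, D, hD₁, hD₂.eq_bot, hD, rfl⟩

theorem sInf_rghwSet_lt_sInf_rghwSet_succ (h : (rghwSet C₁ C₂ (t + 1)).Nonempty) :
    sInf (rghwSet C₁ C₂ t) < sInf (rghwSet C₁ C₂ (t + 1)) := by
  obtain ⟨D, hD₁, hD₂, hD, hsupp⟩ := Nat.sInf_mem h
  obtain ⟨D', hD'D, hD', hss⟩ := exists_finrank_eq_codeSupp_ssubset D hD
  have hD'₂ : D' ⊓ C₂ = ⊥ := ((disjoint_iff.mpr hD₂).mono_left hD'D).eq_bot
  calc sInf (rghwSet C₁ C₂ t) ≤ (codeSupp D').ncard := Nat.sInf_le ⟨D', hD'D.trans hD₁, hD'₂, hD', rfl⟩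
    _ < (codeSupp D).ncard := Set.ncard_lt_ncard hss
    _ = sInf (rghwSet C₁ C₂ (t + 1)) := hsupp

end rghw

theorem rghw_well_defined_and_strict_mono_general
    (F : Type) [Field F] (n ℓ : ℕ)
    (C₁ C₂ : Submodule F (Fin n → F)) (hsub : C₂ ≤ C₁)
    (hdim : Module.finrank F C₁ - Module.finrank F C₂ = ℓ) :
    (∀ t, 1 ≤ t → t ≤ ℓ → (rghwSet C₁ C₂ t).Nonempty) ∧
    (∀ t, 1 ≤ t → t + 1 ≤ ℓ →
      sInf (rghwSet C₁ C₂ t) < sInf (rghwSet C₁ C₂ (t + 1))) := by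
  have hle : finrank F C₂ ≤ finrank F C₁ := Submodule.finrank_mono hsub
  have hnonempty : ∀ t ≤ ℓ, (rghwSet C₁ C₂ t).Nonempty := fun t ht ↦ rghwSet_nonempty hsub (by omega)
  exact ⟨fun t _ ht ↦ hnonempty t ht, fun t _ ht ↦ sInf_rghwSet_lt_sInf_rghwSet_succ (hnonempty _ ht)⟩

theorem rghw_well_defined_and_strict_mono
    (F : Type) [Field F] [Fintype F] (n ℓ : ℕ) (hℓ : 1 ≤ ℓ)
    (C₁ C₂ : Submodule F (Fin n → F)) (hsub : C₂ ≤ C₁) (hne : C₂ ≠ C₁)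
    (hdim : Module.finrank F C₁ - Module.finrank F C₂ = ℓ) :
    (∀ t, 1 ≤ t → t ≤ ℓ → (rghwSet C₁ C₂ t).Nonempty) ∧
    (∀ t, 1 ≤ t → t + 1 ≤ ℓ →
      sInf (rghwSet C₁ C₂ t) < sInf (rghwSet C₁ C₂ (t + 1))) :=
  rghw_well_defined_and_strict_mono_general F n ℓ C₁ C₂ hsub hdim
end

section
/- Let F be a finite field and C₂ ⊆ C₁ ⊆ F^n nested linear codes with ℓ = dim C₁ − dim C₂. Fix a basis b₁,…,b_{k₂} of C₂ extended to a basis b₁,…,b_{k₁} of C₁. For a secret s ∈ F^ℓ and random r ∈ F^{k₂}, define the share vector c(r,s) = Σ r_i b_i + Σ s_j b_{k₂+j}. Let A ⊆ {1,…,n} and let π_A : F^n → F^{#A} be the projection onto coordinates in A. Then the number of secrets s for which there exists r with π_A(c(r,s)) equal to a fixed realizable share pattern is q^m, where m = max{dim D : D ⊆ C₁, D ∩ C₂ = {0}, Supp(D) ⊆ Ā} and Ā = {1,…,n} \ A. -/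
def rampShare {F : Type} [Field F] {n k₂ ℓ : ℕ}
    (bvec : Fin (k₂ + ℓ) → (Fin n → F)) (r : Fin k₂ → F) (s : Fin ℓ → F) :
    Fin n → F :=
  (∑ i : Fin k₂, r i • bvec (Fin.castAdd ℓ i))
    + (∑ j : Fin ℓ, s j • bvec (Fin.natAdd k₂ j))

theorem ramp_secret_count
    (F : Type) [Field F] [Fintype F] (n k₂ ℓ : ℕ)
    (C₁ C₂ : Submodule F (Fin n → F)) (hsub : C₂ ≤ C₁)
    (hℓ : Module.finrank F C₁ - Module.finrank F C₂ = ℓ)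
    (hk₂ : Module.finrank F C₂ = k₂)
    (bvec : Fin (k₂ + ℓ) → (Fin n → F))
    (hli : LinearIndependent F bvec)
    (hspan₂ : Submodule.span F (Set.range (fun i : Fin k₂ => bvec (Fin.castAdd ℓ i))) = C₂)
    (hspan₁ : Submodule.span F (Set.range bvec) = C₁)
    (A : Set (Fin n)) (r₀ : Fin k₂ → F) (s₀ : Fin ℓ → F) :
    Nat.card {s : Fin ℓ → F //
        ∃ r : Fin k₂ → F, ∀ i ∈ A, rampShare bvec r s i = rampShare bvec r₀ s₀ i}
      = Fintype.card F ^
          sSup {d : ℕ | ∃ D : Submodule F (Fin n → F),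
            D ≤ C₁ ∧ D ⊓ C₂ = ⊥ ∧ codeSupp D ⊆ Aᶜ ∧ Module.finrank F D = d} := by
  classical
  -- the subspace of vectors vanishing on A
  set K : Submodule F (Fin n → F) :=
    ⨅ i ∈ A, LinearMap.ker (LinearMap.proj i : (Fin n → F) →ₗ[F] F) with hK
  have memK : ∀ v : Fin n → F, v ∈ K ↔ ∀ i ∈ A, v i = 0 := by
    intro v
    simp [hK, Submodule.mem_iInf, LinearMap.mem_ker]
  -- the linear maps
  set fmap : (Fin k₂ → F) →ₗ[F] (Fin n → F) :=
    Fintype.linearCombination F (fun i : Fin k₂ => bvec (Fin.castAdd ℓ i)) with hf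
  set gmap : (Fin ℓ → F) →ₗ[F] (Fin n → F) :=
    Fintype.linearCombination F (fun j : Fin ℓ => bvec (Fin.natAdd k₂ j)) with hg
  set cmap : ((Fin k₂ → F) × (Fin ℓ → F)) →ₗ[F] (Fin n → F) :=
    fmap ∘ₗ (LinearMap.fst F _ _) + gmap ∘ₗ (LinearMap.snd F _ _) with hc
  have cmap_apply : ∀ (r : Fin k₂ → F) (s : Fin ℓ → F),
      cmap (r, s) = rampShare bvec r s := by
    intro r s
    simp [hc, hf, hg, rampShare, Fintype.linearCombination_apply]
  -- injectivity of cmap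
  have hinj : Function.Injective cmap := by
    rw [injective_iff_map_eq_zero]
    rintro ⟨r, s⟩ h
    have h0 : ∑ i : Fin (k₂ + ℓ),
        (Fin.addCases r s : Fin (k₂ + ℓ) → F) i • bvec i = 0 := by
      rw [Fin.sum_univ_add]
      simpa [hc, hf, hg, Fintype.linearCombination_apply] using h
    have hz := Fintype.linearIndependent_iff.mp hli _ h0
    have hr : r = 0 := funext fun i => by simpa using hz (Fin.castAdd ℓ i)
    have hs : s = 0 := funext fun j => by simpa using hz (Fin.natAdd k₂ j)
    simp [hr, hs, Prod.ext_iff]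
  have finrank_map_cmap : ∀ p : Submodule F ((Fin k₂ → F) × (Fin ℓ → F)),
      Module.finrank F (Submodule.map cmap p) = Module.finrank F p := fun p =>
    ((Submodule.equivMapOfInjective cmap hinj p).finrank_eq).symm
  -- range computations
  have hrange_f : LinearMap.range fmap = C₂ := by
    rw [hf, Fintype.range_linearCombination, hspan₂]
  have hbmem : ∀ i, bvec i ∈ C₁ := fun i =>
    hspan₁ ▸ Submodule.subset_span (Set.mem_range_self i)
  have hrange_c : LinearMap.range cmap = C₁ := by
    apply le_antisymm
    · rintro _ ⟨⟨r, s⟩, rfl⟩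
      have : cmap (r, s) = (∑ i : Fin k₂, r i • bvec (Fin.castAdd ℓ i))
          + (∑ j : Fin ℓ, s j • bvec (Fin.natAdd k₂ j)) := by
        simp [hc, hf, hg, Fintype.linearCombination_apply]
      rw [this]
      refine Submodule.add_mem _ ?_ ?_ <;>
        exact Submodule.sum_mem _ fun i _ => Submodule.smul_mem _ _ (hbmem _)
    · rw [← hspan₁, Submodule.span_le]
      rintro _ ⟨i, rfl⟩
      induction i using Fin.addCases with
      | left j =>
        exact ⟨(Pi.single j 1, 0), by simp [hc, hf, hg]⟩
      | right j =>
        exact ⟨(0, Pi.single j 1), by simp [hc, hf, hg]⟩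
  -- key subspaces
  set W : Submodule F (Fin n → F) := C₁ ⊓ K with hW
  set U : Submodule F ((Fin k₂ → F) × (Fin ℓ → F)) := Submodule.comap cmap K with hU
  have hmapU : Submodule.map cmap U = W := by
    rw [hU, Submodule.map_comap_eq, hrange_c]
  have hker_eq : Submodule.map cmap
      (LinearMap.ker (LinearMap.snd F (Fin k₂ → F) (Fin ℓ → F))) = C₂ := by
    rw [← hrange_f]
    ext v
    constructor
    · rintro ⟨⟨r, s⟩, hs, rfl⟩
      have hs0 : s = 0 := hs
      exact ⟨r, by simp [hs0, hc]⟩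
    · rintro ⟨r, rfl⟩
      exact ⟨(r, 0), by simp [LinearMap.mem_ker], by simp [hc]⟩
  set S₀ : Submodule F (Fin ℓ → F) :=
    Submodule.map (LinearMap.snd F (Fin k₂ → F) (Fin ℓ → F)) U with hS₀
  -- rank computations
  set φ : ↥U →ₗ[F] (Fin ℓ → F) :=
    (LinearMap.snd F (Fin k₂ → F) (Fin ℓ → F)).comp U.subtype with hφ
  have hrangeφ : LinearMap.range φ = S₀ := by
    rw [hφ, LinearMap.range_comp, Submodule.range_subtype]
  have hkerφ : Module.finrank F (LinearMap.ker φ)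
      = Module.finrank F (W ⊓ C₂ : Submodule F (Fin n → F)) := by
    have h1 : LinearMap.ker φ = Submodule.comap U.subtype
        (LinearMap.ker (LinearMap.snd F (Fin k₂ → F) (Fin ℓ → F))) := by
      rw [hφ, LinearMap.ker_comp]
    have h2 : Submodule.map U.subtype (LinearMap.ker φ)
        = U ⊓ LinearMap.ker (LinearMap.snd F (Fin k₂ → F) (Fin ℓ → F)) := by
      rw [h1, Submodule.map_comap_subtype]
    have h3 : Submodule.map cmap
        (U ⊓ LinearMap.ker (LinearMap.snd F (Fin k₂ → F) (Fin ℓ → F))) = W ⊓ C₂ := by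
      rw [Submodule.map_inf cmap hinj, hmapU, hker_eq]
    calc Module.finrank F (LinearMap.ker φ)
        = Module.finrank F (Submodule.map U.subtype (LinearMap.ker φ)) :=
          (Submodule.finrank_map_subtype_eq U _).symm
      _ = Module.finrank F (W ⊓ C₂ : Submodule F (Fin n → F)) := by
          rw [h2, ← h3, finrank_map_cmap]
  have hUW : Module.finrank F U = Module.finrank F W := by
    rw [← hmapU, finrank_map_cmap]
  have key : Module.finrank F S₀ + Module.finrank F (W ⊓ C₂ : Submodule F (Fin n → F))
      = Module.finrank F W := by
    rw [← hrangeφ, ← hkerφ, ← hUW]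
    exact LinearMap.finrank_range_add_finrank_ker φ
  set m := Module.finrank F S₀ with hm
  set T : Set ℕ := {d : ℕ | ∃ D : Submodule F (Fin n → F),
      D ≤ C₁ ∧ D ⊓ C₂ = ⊥ ∧ codeSupp D ⊆ Aᶜ ∧ Module.finrank F D = d} with hT
  -- upper bound
  have hub : ∀ d ∈ T, d ≤ m := by
    rintro d ⟨D, hD1, hD2, hD3, rfl⟩
    have hDK : D ≤ K := by
      intro v hv
      rw [memK]
      intro i hi
      by_contra hne
      exact hD3 ⟨v, hv, hne⟩ hi
    have hDW : D ≤ W := le_inf hD1 hDK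
    have hdisj : D ⊓ (W ⊓ C₂) = ⊥ := by
      rw [eq_bot_iff, ← hD2]
      exact inf_le_inf_left D inf_le_right
    have h4 := Submodule.finrank_sup_add_finrank_inf_eq D (W ⊓ C₂)
    rw [hdisj] at h4
    simp only [finrank_bot, add_zero] at h4
    have h5 : Module.finrank F ((D ⊔ (W ⊓ C₂)) : Submodule F (Fin n → F))
        ≤ Module.finrank F W :=
      Submodule.finrank_mono (sup_le hDW inf_le_left)
    omega
  -- membership: m is attained
  have hmem : m ∈ T := by
    set p' : Submodule F ↥W := Submodule.comap W.subtype C₂ with hp'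
    obtain ⟨q', hq'⟩ := Submodule.exists_isCompl p'
    refine ⟨Submodule.map W.subtype q', ?_, ?_, ?_, ?_⟩
    · exact le_trans (Submodule.map_subtype_le W q') inf_le_left
    · rw [eq_bot_iff]
      rintro x ⟨hx1, hx2⟩
      obtain ⟨y, hy, rfl⟩ := hx1
      have hyp : y ∈ p' := hx2
      have : y ∈ p' ⊓ q' := ⟨hyp, hy⟩
      rw [hq'.inf_eq_bot] at this
      have hy0 : y = 0 := by simpa using this
      simp [hy0]
    · rintro i ⟨v, hv, hvi⟩
      intro hiA
      obtain ⟨y, _, rfl⟩ := hv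
      exact hvi (((memK _).mp y.2.2) i hiA)
    · have e1 : Module.finrank F (Submodule.map W.subtype q') = Module.finrank F q' :=
        Submodule.finrank_map_subtype_eq W q'
      have e2 : Module.finrank F p' + Module.finrank F q' = Module.finrank F W :=
        Submodule.finrank_add_eq_of_isCompl hq'
      have e3 : Module.finrank F p'
          = Module.finrank F (W ⊓ C₂ : Submodule F (Fin n → F)) := by
        rw [← Submodule.finrank_map_subtype_eq W p', hp', Submodule.map_comap_subtype]
      omega
  have hsSup : sSup T = m :=
    le_antisymm (csSup_le ⟨m, hmem⟩ hub) (le_csSup ⟨m, hub⟩ hmem)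
  -- the counting bijection
  have hcount : ∀ s : Fin ℓ → F,
      (∃ r : Fin k₂ → F, ∀ i ∈ A, rampShare bvec r s i = rampShare bvec r₀ s₀ i)
        ↔ (s - s₀) ∈ S₀ := by
    intro s
    constructor
    · rintro ⟨r, hr⟩
      refine ⟨(r - r₀, s - s₀), ?_, rfl⟩
      have hmemk : cmap (r - r₀, s - s₀) ∈ K := by
        rw [memK]
        intro i hi
        have hdiff : cmap (r - r₀, s - s₀)
            = rampShare bvec r s - rampShare bvec r₀ s₀ := by
          have : ((r - r₀, s - s₀) : (Fin k₂ → F) × (Fin ℓ → F)) = (r, s) - (r₀, s₀) := rfl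
          rw [this, map_sub, cmap_apply, cmap_apply]
        rw [hdiff]
        simp [hr i hi]
      exact hmemk
    · rintro ⟨⟨r', s'⟩, hUmem, hs'⟩
      have hs'' : s' = s - s₀ := hs'
      refine ⟨r' + r₀, fun i hi => ?_⟩
      have h1 : cmap (r', s') i = 0 := ((memK _).mp hUmem) i hi
      have h2 : ((r' + r₀, s) : (Fin k₂ → F) × (Fin ℓ → F)) = (r', s') + (r₀, s₀) := by
        rw [hs'']
        simp [Prod.ext_iff]
      have h3 : rampShare bvec (r' + r₀) s
          = cmap (r', s') + rampShare bvec r₀ s₀ := by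
        rw [← cmap_apply, h2, map_add, cmap_apply, cmap_apply]
      have := congrFun h3 i
      rw [this, Pi.add_apply, h1, zero_add]
  have e : {s : Fin ℓ → F //
      ∃ r : Fin k₂ → F, ∀ i ∈ A, rampShare bvec r s i = rampShare bvec r₀ s₀ i} ≃ ↥S₀ :=
    Equiv.subtypeEquiv (Equiv.subRight s₀) (fun s => by simpa using hcount s)
  rw [Nat.card_congr e, hsSup]
  have : Fintype ↥S₀ := Fintype.ofFinite _
  rw [Nat.card_eq_fintype_card, Module.card_eq_pow_finrank (K := F) (V := ↥S₀)]
end
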